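/- arXiv:1603.02877 — 8 statements merged into one kernel-verified Lean document; each statement's English description precedes it below -/
import Mathlib

section
/- For any n×n complex matrix α and real number v, the 2n×2n block matrix 𝓛 = [[e^{-2v}·1_n, -e^{-v}·α],[e^{-v}·α†, e^{2v}·1_n - α†α]] is invertible, with inverse 𝓛⁻¹ = [[e^{2v}·1_n - αα†, e^{-v}·α],[-e^{-v}·α†, e^{-2v}·1_n]]. -/
open Matrix

/-- the block matrix 𝓛 is invertible with the stated explicit inverse. -/
theorem stmt0 (n : ℕ) (v : ℝ) (α : Matrix (Fin n) (Fin n) ℂ)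
    (L Linv : Matrix (Fin n ⊕ Fin n) (Fin n ⊕ Fin n) ℂ)
    (hL : L = fromBlocks ((Real.exp (-2*v) : ℂ) • (1 : Matrix (Fin n) (Fin n) ℂ))
      (-(Real.exp (-v) : ℂ) • α)
      ((Real.exp (-v) : ℂ) • αᴴ)
      ((Real.exp (2*v) : ℂ) • (1 : Matrix (Fin n) (Fin n) ℂ) - αᴴ * α))
    (hLinv : Linv = fromBlocks
      ((Real.exp (2*v) : ℂ) • (1 : Matrix (Fin n) (Fin n) ℂ) - α * αᴴ)
      ((Real.exp (-v) : ℂ) • α)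
      (-(Real.exp (-v) : ℂ) • αᴴ)
      ((Real.exp (-2*v) : ℂ) • (1 : Matrix (Fin n) (Fin n) ℂ))) :
    L * Linv = 1 ∧ Linv * L = 1 ∧ IsUnit L ∧ L⁻¹ = Linv := by
  have hac : Complex.exp (2*(v:ℂ)) * Complex.exp (-2*(v:ℂ)) = 1 := by
    rw [← Complex.exp_add]; simp
  have hb2 : Complex.exp (-(v:ℂ)) * Complex.exp (-(v:ℂ)) = Complex.exp (-2*(v:ℂ)) := by
    rw [← Complex.exp_add]; congr 1; ring
  have h1 : L * Linv = 1 := by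
    subst hL hLinv
    rw [fromBlocks_multiply, ← fromBlocks_one]
    refine fromBlocks_inj.mpr ⟨?_, ?_, ?_, ?_⟩
    all_goals
      simp only [Matrix.smul_mul, Matrix.mul_smul, smul_smul, Matrix.mul_sub,
        Matrix.sub_mul, Matrix.one_mul, Matrix.mul_one, neg_smul, smul_neg,
        neg_neg, smul_sub, Matrix.neg_mul, Matrix.mul_neg, Matrix.mul_assoc]
    all_goals match_scalars
    all_goals
      first
        | ring1
        | linear_combination hac
        | linear_combination hb2
  have h2 : Linv * L = 1 := by
    subst hL hLinv
    rw [fromBlocks_multiply, ← fromBlocks_one]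
    refine fromBlocks_inj.mpr ⟨?_, ?_, ?_, ?_⟩
    all_goals
      simp only [Matrix.smul_mul, Matrix.mul_smul, smul_smul, Matrix.mul_sub,
        Matrix.sub_mul, Matrix.one_mul, Matrix.mul_one, neg_smul, smul_neg,
        neg_neg, smul_sub, Matrix.neg_mul, Matrix.mul_neg, Matrix.mul_assoc]
    all_goals match_scalars
    all_goals
      first
        | ring1
        | linear_combination hac
        | linear_combination hb2
  exact ⟨h1, h2, ⟨⟨L, Linv, h1, h2⟩, rfl⟩, Matrix.inv_eq_right_inv h1⟩
end

section
/- For any n×n complex matrix α, real v, and positive integer j, the j-th power of the block matrix 𝓛 = [[e^{-2v}·1_n, -e^{-v}·α],[e^{-v}·α†, e^{2v}·1_n - α†α]] has blocks of the form: (𝓛^j)_{11} = Σ_{m=1}^{j} a_m (αα†)^{j-m}, (𝓛^j)_{12} = α·Σ_{m=1}^{j} b_m (α†α)^{j-m}, (𝓛^j)_{21} = α†·Σ_{m=1}^{j} c_m (αα†)^{j-m}, (𝓛^j)_{22} = (-1)^j (α†α)^j + Σ_{m=1}^{j} d_m (α†α)^{j-m}, where the real coefficients a_m, b_m, c_m,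 d_m depend only on v and j (not on α). -/
open Matrix Finset

section helpers

variable {R : Type*} [Ring R] [Module ℂ R]

private lemma sumIf1 (j : ℕ) (u : ℕ → ℂ) (M : R) :
    ∑ k ∈ range (j+1), (if k < j then u k else 0) • M^k = ∑ k ∈ range j, u k • M^k := by
  rw [Finset.sum_range_succ, if_neg (lt_irrefl j), zero_smul, add_zero]
  exact Finset.sum_congr rfl fun k hk => by rw [if_pos (Finset.mem_range.mp hk)]

private lemma sumIf2 (j : ℕ) (w : ℂ) (M : R) :
    ∑ k ∈ range (j+1), (if k = j then w else 0) • M^k = w • M^j := by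
  rw [Finset.sum_range_succ, if_pos rfl]
  rw [Finset.sum_eq_zero fun k hk => by
    rw [if_neg (Nat.ne_of_lt (Finset.mem_range.mp hk)), zero_smul], zero_add]

private lemma sumIf3 (j : ℕ) (u : ℕ → ℂ) (M : R) :
    ∑ k ∈ range (j+1), (if k = 0 then 0 else u (k-1)) • M^k = ∑ k ∈ range j, u k • M^(k+1) := by
  rw [Finset.sum_range_succ']
  simp

private lemma icc_to_range (j : ℕ) (u : ℕ → ℂ) (M : R) :
    ∑ m ∈ Icc 1 j, u (j-m) • M^(j-m) = ∑ k ∈ range j, u k • M^k := by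
  refine Finset.sum_nbij' (i := fun m => j - m) (j := fun k => j - k) ?_ ?_ ?_ ?_ ?_
  · intro m hm
    simp only [Finset.mem_Icc] at hm
    show j - m ∈ range j
    exact Finset.mem_range.mpr (by omega)
  · intro k hk
    simp only [Finset.mem_range] at hk
    show j - k ∈ Icc 1 j
    exact Finset.mem_Icc.mpr (by omega)
  · intro m hm
    simp only [Finset.mem_Icc] at hm
    show j - (j - m) = m
    omega
  · intro k hk
    simp only [Finset.mem_range] at hk
    show j - (j - k) = k
    omega
  · intro m hm
    rfl

end helpers

private lemma pow_comm_aux (n : ℕ) (α : Matrix (Fin n) (Fin n) ℂ) (k : ℕ) :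
    α * (αᴴ * α) ^ k = (α * αᴴ) ^ k * α := by
  induction k with
  | zero => simp
  | succ k ih =>
      rw [pow_succ, pow_succ, ← mul_assoc, ih, mul_assoc, mul_assoc, ← mul_assoc α αᴴ α]

private lemma pow_comm_aux' (n : ℕ) (α : Matrix (Fin n) (Fin n) ℂ) (k : ℕ) :
    αᴴ * (α * αᴴ) ^ k = (αᴴ * α) ^ k * αᴴ := by
  have := pow_comm_aux n αᴴ k
  simpa using this

private lemma key (n : ℕ) (v : ℝ) : ∀ j : ℕ, 1 ≤ j →
    ∃ a b c d : ℕ → ℝ, ∀ α : Matrix (Fin n) (Fin n) ℂ,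
      (fromBlocks ((Real.exp (-2*v) : ℂ) • (1 : Matrix (Fin n) (Fin n) ℂ))
        (-(Real.exp (-v) : ℂ) • α)
        ((Real.exp (-v) : ℂ) • αᴴ)
        ((Real.exp (2*v) : ℂ) • (1 : Matrix (Fin n) (Fin n) ℂ) - αᴴ * α)) ^ j
      = fromBlocks (∑ k ∈ range j, (a k : ℂ) • (α * αᴴ) ^ k)
          (α * ∑ k ∈ range j, (b k : ℂ) • (αᴴ * α) ^ k)
          (αᴴ * ∑ k ∈ range j, (c k : ℂ) • (α * αᴴ) ^ k)
          (((-1 : ℂ) ^ j) • (αᴴ * α) ^ j + ∑ k ∈ range j, (d k : ℂ) • (αᴴ * α) ^ k) := by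
  intro j hj
  induction j, hj using Nat.le_induction with
  | base =>
      refine ⟨fun _ => Real.exp (-2*v), fun _ => -Real.exp (-v),
        fun _ => Real.exp (-v), fun _ => Real.exp (2*v), fun α => ?_⟩
      rw [pow_one]
      congr 1 <;> simp [sub_eq_add_neg, add_comm, mul_smul_comm]
  | succ j hj ih =>
      obtain ⟨a, b, c, d, ih⟩ := ih
      set e : ℝ := Real.exp (-2*v) with he
      set f : ℝ := Real.exp (-v) with hf
      set g : ℝ := Real.exp (2*v) with hg
      refine ⟨fun k => (if k < j then e * a k else 0) + (if k = 0 then 0 else f * b (k-1)),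
        fun k => (if k < j then g * b k - f * a k else 0) + (if k = 0 then 0 else -(b (k-1))),
        fun k => (if k < j then e * c k + f * d k else 0) + (if k = j then f * (-1)^j else 0),
        fun k => ((if k < j then g * d k else 0) + (if k = j then g * (-1)^j else 0))
          + (if k = 0 then 0 else -(f * c (k-1)) - d (k-1)),
        fun α => ?_⟩
      rw [pow_succ, ih α, fromBlocks_multiply]
      set X := α * αᴴ with hX
      set Y := αᴴ * α with hY
      have hαY : ∀ k : ℕ, α * Y ^ k = X ^ k * α := pow_comm_aux n α
      have hαX : ∀ k : ℕ, αᴴ * X ^ k = Y ^ k * αᴴ := pow_comm_aux' n α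
      -- pieces
      have pA1 : (∑ k ∈ range j, (a k : ℂ) • X ^ k) * ((e : ℂ) • 1)
          = ∑ k ∈ range j, ((e : ℂ) * (a k : ℂ)) • X ^ k := by
        rw [Finset.sum_mul]
        refine Finset.sum_congr rfl fun k _ => ?_
        simp only [smul_mul_assoc, mul_smul_comm, smul_smul, mul_one]
        all_goals module
      have pB1 : (α * ∑ k ∈ range j, (b k : ℂ) • Y ^ k) * ((f : ℂ) • αᴴ)
          = ∑ k ∈ range j, ((f : ℂ) * (b k : ℂ)) • X ^ (k+1) := by
        rw [Finset.mul_sum, Finset.sum_mul]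
        refine Finset.sum_congr rfl fun k _ => ?_
        simp only [mul_smul_comm, hαY, smul_mul_assoc, smul_smul, pow_succ, mul_assoc, ← hX]
        all_goals module
      have pA2 : (∑ k ∈ range j, (a k : ℂ) • X ^ k) * (-(f : ℂ) • α)
          = α * ∑ k ∈ range j, (-((f : ℂ) * (a k : ℂ))) • Y ^ k := by
        rw [Finset.sum_mul, Finset.mul_sum]
        refine Finset.sum_congr rfl fun k _ => ?_
        simp only [smul_mul_assoc, mul_smul_comm, smul_smul, hαY]
        all_goals module
      have pB2a : (α * ∑ k ∈ range j, (b k : ℂ) • Y ^ k) * ((g : ℂ) • 1)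
          = α * ∑ k ∈ range j, ((g : ℂ) * (b k : ℂ)) • Y ^ k := by
        rw [Finset.mul_sum, Finset.mul_sum, Finset.sum_mul]
        refine Finset.sum_congr rfl fun k _ => ?_
        simp only [mul_smul_comm, smul_mul_assoc, smul_smul, mul_one]
        all_goals module
      have pB2b : (α * ∑ k ∈ range j, (b k : ℂ) • Y ^ k) * Y
          = α * ∑ k ∈ range j, (b k : ℂ) • Y ^ (k+1) := by
        rw [Finset.mul_sum, Finset.mul_sum, Finset.sum_mul]
        refine Finset.sum_congr rfl fun k _ => ?_
        simp only [mul_smul_comm, smul_mul_assoc, smul_smul, pow_succ, mul_assoc]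
      have pC1 : (αᴴ * ∑ k ∈ range j, (c k : ℂ) • X ^ k) * ((e : ℂ) • 1)
          = αᴴ * ∑ k ∈ range j, ((e : ℂ) * (c k : ℂ)) • X ^ k := by
        rw [Finset.mul_sum, Finset.mul_sum, Finset.sum_mul]
        refine Finset.sum_congr rfl fun k _ => ?_
        simp only [mul_smul_comm, smul_mul_assoc, smul_smul, mul_one]
        all_goals module
      have pD1a : (((-1 : ℂ) ^ j) • Y ^ j) * ((f : ℂ) • αᴴ)
          = αᴴ * (((f : ℂ) * (-1 : ℂ)^j) • X ^ j) := by
        simp only [smul_mul_assoc, mul_smul_comm, smul_smul, hαX]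
        all_goals module
      have pD1b : (∑ k ∈ range j, (d k : ℂ) • Y ^ k) * ((f : ℂ) • αᴴ)
          = αᴴ * ∑ k ∈ range j, ((f : ℂ) * (d k : ℂ)) • X ^ k := by
        rw [Finset.sum_mul, Finset.mul_sum]
        refine Finset.sum_congr rfl fun k _ => ?_
        simp only [smul_mul_assoc, mul_smul_comm, smul_smul, ← hαX]
        all_goals module
      have pC2 : (αᴴ * ∑ k ∈ range j, (c k : ℂ) • X ^ k) * (-(f : ℂ) • α)
          = ∑ k ∈ range j, (-((f : ℂ) * (c k : ℂ))) • Y ^ (k+1) := by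
        rw [Finset.mul_sum, Finset.sum_mul]
        refine Finset.sum_congr rfl fun k _ => ?_
        simp only [mul_smul_comm, hαX, smul_mul_assoc, smul_smul, pow_succ, mul_assoc, ← hY]
        all_goals module
      have pD2a : (((-1 : ℂ) ^ j) • Y ^ j) * ((g : ℂ) • 1)
          = ((g : ℂ) * (-1 : ℂ)^j) • Y ^ j := by
        simp only [smul_mul_assoc, mul_smul_comm, smul_smul, mul_one]
        all_goals module
      have pD2b : (∑ k ∈ range j, (d k : ℂ) • Y ^ k) * ((g : ℂ) • 1)
          = ∑ k ∈ range j, ((g : ℂ) * (d k : ℂ)) • Y ^ k := by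
        rw [Finset.sum_mul]
        refine Finset.sum_congr rfl fun k _ => ?_
        simp only [smul_mul_assoc, mul_smul_comm, smul_smul, mul_one]
        all_goals module
      have pD2c : (((-1 : ℂ) ^ j) • Y ^ j) * Y = ((-1 : ℂ) ^ j) • Y ^ (j+1) := by
        rw [smul_mul_assoc, ← pow_succ]
      have pD2d : (∑ k ∈ range j, (d k : ℂ) • Y ^ k) * Y
          = ∑ k ∈ range j, (d k : ℂ) • Y ^ (k+1) := by
        rw [Finset.sum_mul]
        refine Finset.sum_congr rfl fun k _ => ?_
        rw [smul_mul_assoc, ← pow_succ]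
      -- blocks
      have h11 : (∑ k ∈ range j, (a k : ℂ) • X ^ k) * ((e : ℂ) • 1)
          + (α * ∑ k ∈ range j, (b k : ℂ) • Y ^ k) * ((f : ℂ) • αᴴ)
          = ∑ k ∈ range (j+1),
              ((((if k < j then e * a k else 0) + (if k = 0 then 0 else f * b (k-1))) : ℝ) : ℂ)
                • X ^ k := by
        rw [pA1, pB1]
        push_cast [apply_ite (fun x : ℝ => (x : ℂ))]
        simp only [add_smul, Finset.sum_add_distrib]
        rw [sumIf1 j (fun k => (e : ℂ) * (a k : ℂ)) X,
          sumIf3 j (fun k => (f : ℂ) * (b k : ℂ)) X]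
      have h12 : (∑ k ∈ range j, (a k : ℂ) • X ^ k) * (-(f : ℂ) • α)
          + (α * ∑ k ∈ range j, (b k : ℂ) • Y ^ k) * ((g : ℂ) • 1 - Y)
          = α * ∑ k ∈ range (j+1),
              ((((if k < j then g * b k - f * a k else 0) + (if k = 0 then 0 else -(b (k-1)))) : ℝ) : ℂ)
                • Y ^ k := by
        rw [mul_sub, pA2, pB2a, pB2b, ← mul_sub, ← mul_add]
        congr 1
        push_cast [apply_ite (fun x : ℝ => (x : ℂ))]
        simp only [add_smul, sub_smul, neg_smul, Finset.sum_add_distrib, Finset.sum_sub_distrib]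
        rw [sumIf1 j (fun k => (g : ℂ) * (b k : ℂ) - (f : ℂ) * (a k : ℂ)) Y,
          sumIf3 j (fun k => -((b k : ℂ)) ) Y]
        simp only [sub_smul, neg_smul, Finset.sum_sub_distrib, Finset.sum_neg_distrib]
        abel
      have h21 : (αᴴ * ∑ k ∈ range j, (c k : ℂ) • X ^ k) * ((e : ℂ) • 1)
          + (((-1 : ℂ) ^ j) • Y ^ j + ∑ k ∈ range j, (d k : ℂ) • Y ^ k) * ((f : ℂ) • αᴴ)
          = αᴴ * ∑ k ∈ range (j+1),
              ((((if k < j then e * c k + f * d k else 0) + (if k = j then f * (-1)^j else 0)) : ℝ) : ℂ)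
                • X ^ k := by
        rw [add_mul, pC1, pD1a, pD1b, ← mul_add, ← mul_add]
        congr 1
        push_cast [apply_ite (fun x : ℝ => (x : ℂ))]
        simp only [add_smul, Finset.sum_add_distrib]
        rw [sumIf1 j (fun k => (e : ℂ) * (c k : ℂ) + (f : ℂ) * (d k : ℂ)) X,
          sumIf2 j ((f : ℂ) * (-1 : ℂ)^j) X]
        simp only [add_smul, Finset.sum_add_distrib]
        abel
      have h22 : (αᴴ * ∑ k ∈ range j, (c k : ℂ) • X ^ k) * (-(f : ℂ) • α)
          + (((-1 : ℂ) ^ j) • Y ^ j + ∑ k ∈ range j, (d k : ℂ) • Y ^ k) * ((g : ℂ) • 1 - Y)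
          = ((-1 : ℂ) ^ (j+1)) • Y ^ (j+1)
            + ∑ k ∈ range (j+1),
              (((((if k < j then g * d k else 0) + (if k = j then g * (-1)^j else 0))
                + (if k = 0 then 0 else -(f * c (k-1)) - d (k-1))) : ℝ) : ℂ) • Y ^ k := by
        rw [mul_sub, add_mul, add_mul, pC2, pD2a, pD2b, pD2c, pD2d]
        push_cast [apply_ite (fun x : ℝ => (x : ℂ))]
        simp only [add_smul, sub_smul, neg_smul, Finset.sum_add_distrib, Finset.sum_sub_distrib]
        rw [sumIf1 j (fun k => (g : ℂ) * (d k : ℂ)) Y,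
          sumIf2 j ((g : ℂ) * (-1 : ℂ)^j) Y,
          sumIf3 j (fun k => -((f : ℂ) * (c k : ℂ)) - (d k : ℂ)) Y]
        simp only [sub_smul, neg_smul, Finset.sum_sub_distrib, Finset.sum_neg_distrib, pow_succ,
          mul_neg_one, neg_smul]
        abel
      rw [h11, h12, h21, h22]
    

/-- block structure of the powers of 𝓛, with coefficients
depending only on `v` and `j` (not on `α`). -/
theorem stmt1 (n : ℕ) (v : ℝ) (j : ℕ) (hj : 0 < j) :
    ∃ a b c d : ℕ → ℝ, ∀ α : Matrix (Fin n) (Fin n) ℂ,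
      ∀ L : Matrix (Fin n ⊕ Fin n) (Fin n ⊕ Fin n) ℂ,
      L = fromBlocks ((Real.exp (-2*v) : ℂ) • (1 : Matrix (Fin n) (Fin n) ℂ))
        (-(Real.exp (-v) : ℂ) • α)
        ((Real.exp (-v) : ℂ) • αᴴ)
        ((Real.exp (2*v) : ℂ) • (1 : Matrix (Fin n) (Fin n) ℂ) - αᴴ * α) →
      (L ^ j).toBlocks₁₁ = ∑ m ∈ Icc 1 j, (a m : ℂ) • (α * αᴴ) ^ (j - m) ∧
      (L ^ j).toBlocks₁₂ = α * ∑ m ∈ Icc 1 j, (b m : ℂ) • (αᴴ * α) ^ (j - m) ∧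
      (L ^ j).toBlocks₂₁ = αᴴ * ∑ m ∈ Icc 1 j, (c m : ℂ) • (α * αᴴ) ^ (j - m) ∧
      (L ^ j).toBlocks₂₂ = ((-1 : ℂ) ^ j) • (αᴴ * α) ^ j
        + ∑ m ∈ Icc 1 j, (d m : ℂ) • (αᴴ * α) ^ (j - m) := by
  obtain ⟨a, b, c, d, h⟩ := key n v j hj
  refine ⟨fun m => a (j - m), fun m => b (j - m), fun m => c (j - m), fun m => d (j - m),
    fun α L hL => ?_⟩
  subst hL
  rw [h α]
  refine ⟨?_, ?_, ?_, ?_⟩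
  · rw [toBlocks_fromBlocks₁₁]
    exact (icc_to_range j (fun k => (a k : ℂ)) (α * αᴴ)).symm
  · rw [toBlocks_fromBlocks₁₂]
    rw [icc_to_range j (fun k => (b k : ℂ)) (αᴴ * α)]
  · rw [toBlocks_fromBlocks₂₁]
    rw [icc_to_range j (fun k => (c k : ℂ)) (α * αᴴ)]
  · rw [toBlocks_fromBlocks₂₂]
    rw [icc_to_range j (fun k => (d k : ℂ)) (αᴴ * α)]
end

section
/- For the block matrix 𝓛 = [[e^{-2v}·1_n, -e^{-v}·α],[e^{-v}·α†, e^{2v}·1_n - α†α]] and the involution C = [[0_n, 1_n],[1_n, 0_n]], one has C·𝓛⁻¹·C = [[e^{-2v}·1_n, -e^{-v}·α†],[e^{-v}·α, e^{2v}·1_n - αα†]]; i.e., conjugating the inverse of 𝓛 by C yields the matrix of the same form with α replaced by α†. -/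
open Matrix

/-- conjugating 𝓛⁻¹ by the block swap C gives the matrix of the
same form as 𝓛 with α replaced by αᴴ. -/
theorem stmt2 (n : ℕ) (v : ℝ) (α : Matrix (Fin n) (Fin n) ℂ)
    (L C : Matrix (Fin n ⊕ Fin n) (Fin n ⊕ Fin n) ℂ)
    (hL : L = fromBlocks ((Real.exp (-2*v) : ℂ) • (1 : Matrix (Fin n) (Fin n) ℂ))
      (-(Real.exp (-v) : ℂ) • α)
      ((Real.exp (-v) : ℂ) • αᴴ)
      ((Real.exp (2*v) : ℂ) • (1 : Matrix (Fin n) (Fin n) ℂ) - αᴴ * α))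
    (hC : C = fromBlocks 0 (1 : Matrix (Fin n) (Fin n) ℂ) 1 0) :
    C * L⁻¹ * C = fromBlocks
      ((Real.exp (-2*v) : ℂ) • (1 : Matrix (Fin n) (Fin n) ℂ))
      (-(Real.exp (-v) : ℂ) • αᴴ)
      ((Real.exp (-v) : ℂ) • α)
      ((Real.exp (2*v) : ℂ) • (1 : Matrix (Fin n) (Fin n) ℂ) - α * αᴴ) := by
  have hinv : L⁻¹ = fromBlocks
      ((Real.exp (2*v) : ℂ) • (1 : Matrix (Fin n) (Fin n) ℂ) - α * αᴴ)
      ((Real.exp (-v) : ℂ) • α)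
      (-(Real.exp (-v) : ℂ) • αᴴ)
      ((Real.exp (-2*v) : ℂ) • (1 : Matrix (Fin n) (Fin n) ℂ)) := by
    apply Matrix.inv_eq_right_inv
    rw [hL, Matrix.fromBlocks_multiply, ← Matrix.fromBlocks_one]
    have h1 : (Real.exp (-2*v) : ℂ) * Real.exp (2*v) = 1 := by
      rw [← Complex.ofReal_mul, ← Real.exp_add]; norm_num
    have h2 : (Real.exp (-v) : ℂ) * Real.exp (-v) = Real.exp (-2*v) := by
      rw [← Complex.ofReal_mul, ← Real.exp_add]; ring_nf
    have ha : (Real.exp (2*v) : ℂ) * Real.exp (-(2*v)) = 1 := by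
      rw [← Complex.ofReal_mul, ← Real.exp_add]; norm_num
    have hb : (Real.exp (-(2*v)) : ℂ) * Real.exp (2*v) = 1 := by
      rw [← Complex.ofReal_mul, ← Real.exp_add]; norm_num
    simp only [Matrix.mul_smul, Matrix.smul_mul, smul_smul, smul_sub, Matrix.mul_sub,
      Matrix.sub_mul, Matrix.one_mul, Matrix.mul_one, one_smul, neg_smul, smul_neg,
      neg_neg, neg_mul, mul_neg]
    congr 1 <;>
      simp [ha, hb, mul_comm, ← Matrix.mul_assoc, neg_one_smul, ← Complex.exp_add] <;>
      ring_nf <;>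
      simp [← Complex.exp_add] <;> ring_nf
  rw [hinv, hC, Matrix.fromBlocks_multiply, Matrix.fromBlocks_multiply]
  simp
end

section
/- Define H_j(𝓛) = (1/(2j))·tr(𝓛^j) for j a nonzero integer, where 𝓛 = [[e^{-2v}·1_n, -e^{-v}·α],[e^{-v}·α†, e^{2v}·1_n - α†α]] for an n×n complex matrix α. Then H_{-j}(𝓛) = -H_j(𝓛) for every nonzero integer j. -/
open Matrix

variable {R : Type*} [CommRing R] {m : ℕ}

def Mblk (a b c : R) (β γ : Matrix (Fin m) (Fin m) R) :
    Matrix (Fin m ⊕ Fin m) (Fin m ⊕ Fin m) R :=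
  fromBlocks (a • 1) (-b • β) (b • γ) (c • 1 - γ * β)

lemma Mblk_intertwine (a b c : R) (β γ : Matrix (Fin m) (Fin m) R) :
    (fromBlocks γ 0 0 β) * Mblk a b c β γ = Mblk a b c γ β * (fromBlocks γ 0 0 β) := by
  simp only [Mblk, fromBlocks_multiply, Matrix.mul_smul, Matrix.smul_mul, Matrix.mul_one,
    Matrix.one_mul, mul_sub, sub_mul, Matrix.zero_mul, Matrix.mul_zero, add_zero, zero_add,
    smul_zero, Matrix.mul_assoc, sub_zero, sub_self]

lemma trace_pow_of_semiconj {N : Type*} [Fintype N] [DecidableEq N]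
    {S T A B : Matrix N N R} (h1 : S * T = 1) (h2 : T * S = 1)
    (h : S * A = B * S) (k : ℕ) : (B ^ k).trace = (A ^ k).trace := by
  have hB : B = S * A * T := by
    have h3 : S * A * T = B * (S * T) := by rw [h, Matrix.mul_assoc]
    rw [h3, h1, Matrix.mul_one]
  have hpow : ∀ k : ℕ, B ^ k = S * A ^ k * T := by
    intro k
    induction k with
    | zero => simp [h1]
    | succ k ih =>
      rw [pow_succ, pow_succ, ih, hB]
      simp only [Matrix.mul_assoc]
      rw [← Matrix.mul_assoc T S, h2, Matrix.one_mul]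
  rw [hpow, Matrix.trace_mul_cycle, h2, Matrix.one_mul]

lemma Mblk_trace_pow_swap_of_isUnit {K : Type*} [Field K] {m : ℕ} (a b c : K)
    {β γ : Matrix (Fin m) (Fin m) K} (hβ : IsUnit β.det) (hγ : IsUnit γ.det) (k : ℕ) :
    ((Mblk a b c γ β) ^ k).trace = ((Mblk a b c β γ) ^ k).trace := by
  apply trace_pow_of_semiconj (T := fromBlocks γ⁻¹ 0 0 β⁻¹)
    (S := fromBlocks γ 0 0 β)
  · rw [fromBlocks_multiply]
    simp [Matrix.mul_nonsing_inv _ hγ, Matrix.mul_nonsing_inv _ hβ, ← fromBlocks_one]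
  · rw [fromBlocks_multiply]
    simp [Matrix.nonsing_inv_mul _ hγ, Matrix.nonsing_inv_mul _ hβ, ← fromBlocks_one]
  · exact Mblk_intertwine a b c β γ

lemma Mblk_map {S : Type*} [CommRing S] (f : R →+* S) (a b c : R)
    (β γ : Matrix (Fin m) (Fin m) R) :
    (Mblk a b c β γ).map f = Mblk (f a) (f b) (f c) (β.map f) (γ.map f) := by
  ext (i | i) (j | j) <;>
    simp [Mblk, fromBlocks, Matrix.map_apply, Matrix.one_apply, Matrix.mul_apply,
      apply_ite, map_sum] <;>
    (try split_ifs <;> simp_all)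

open Polynomial in
lemma trace_pow_map {S : Type*} [CommRing S] {N : Type*} [Fintype N] [DecidableEq N]
    (f : R →+* S) (M : Matrix N N R) (k : ℕ) :
    (((M.map f)) ^ k).trace = f ((M ^ k).trace) := by
  have h : M.map f = f.mapMatrix M := rfl
  rw [h, ← map_pow]
  simp [Matrix.trace, Matrix.diag, map_sum, RingHom.mapMatrix_apply, Matrix.map_apply]

open Polynomial in
lemma charmatrix_neg_map_eval (β : Matrix (Fin m) (Fin m) R) :
    (charmatrix (-β)).map (evalRingHom (0 : R)) = β := by
  ext i j
  by_cases h : i = j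
  · subst h; simp [Matrix.map_apply]
  · simp [Matrix.map_apply, charmatrix_apply_ne _ _ _ h]

open Polynomial in
lemma Mblk_trace_pow_swap (a b c : ℂ) (β γ : Matrix (Fin m) (Fin m) ℂ) (k : ℕ) :
    ((Mblk a b c γ β) ^ k).trace = ((Mblk a b c β γ) ^ k).trace := by
  classical
  set Bp : Matrix (Fin m) (Fin m) (Polynomial ℂ) := charmatrix (-β) with hBp
  set Gp : Matrix (Fin m) (Fin m) (Polynomial ℂ) := charmatrix (-γ) with hGp
  set φ : Polynomial ℂ →+* RatFunc ℂ := algebraMap (Polynomial ℂ) (RatFunc ℂ) with hφdef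
  have hφ : Function.Injective φ := RatFunc.algebraMap_injective ℂ
  have hdet : ∀ δ : Matrix (Fin m) (Fin m) ℂ, IsUnit (((charmatrix (-δ)).map φ).det) := by
    intro δ
    rw [← RingHom.mapMatrix_apply, ← RingHom.map_det]
    refine isUnit_iff_ne_zero.2 fun h => ?_
    have h0 : (charmatrix (-δ)).det = 0 := hφ (by simpa using h)
    exact (charpoly_monic (-δ)).ne_zero h0
  have hswap := Mblk_trace_pow_swap_of_isUnit (φ (C a)) (φ (C b)) (φ (C c))
    (hdet β) (hdet γ) k
  rw [← Mblk_map, ← Mblk_map, trace_pow_map, trace_pow_map] at hswap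
  have hpoly := hφ hswap
  have := congrArg (evalRingHom (0 : ℂ)) hpoly
  rw [← trace_pow_map, ← trace_pow_map, Mblk_map, Mblk_map,
    charmatrix_neg_map_eval, charmatrix_neg_map_eval] at this
  simpa using this

lemma Mblk_mul_right_inv (a b c : R) (hba : b * b = a) (hac : a * c = 1)
    (β γ : Matrix (Fin m) (Fin m) R) :
    Mblk a b c β γ * fromBlocks (c • 1 - β * γ) (b • β) (-b • γ) (a • 1) = 1 := by
  subst hba
  rw [Mblk, fromBlocks_multiply, ← fromBlocks_one, fromBlocks_inj]
  refine ⟨?_, ?_, ?_, ?_⟩ <;>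
  · simp only [Matrix.smul_mul, Matrix.mul_smul, Matrix.one_mul, Matrix.mul_one, smul_sub,
      sub_mul, Matrix.sub_mul, Matrix.mul_sub, smul_smul, neg_smul, smul_neg, neg_neg,
      Matrix.neg_mul, Matrix.mul_neg, Matrix.mul_assoc]
    match_scalars <;> first | ring1 | linear_combination hac | linear_combination -hac

lemma Mblk_mul_left_inv (a b c : R) (hba : b * b = a) (hac : a * c = 1)
    (β γ : Matrix (Fin m) (Fin m) R) :
    fromBlocks (c • 1 - β * γ) (b • β) (-b • γ) (a • 1) * Mblk a b c β γ = 1 := by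
  subst hba
  rw [Mblk, fromBlocks_multiply, ← fromBlocks_one, fromBlocks_inj]
  refine ⟨?_, ?_, ?_, ?_⟩ <;>
  · simp only [Matrix.smul_mul, Matrix.mul_smul, Matrix.one_mul, Matrix.mul_one, smul_sub,
      sub_mul, Matrix.sub_mul, Matrix.mul_sub, smul_smul, neg_smul, smul_neg, neg_neg,
      Matrix.neg_mul, Matrix.mul_neg, Matrix.mul_assoc]
    match_scalars <;> first | ring1 | linear_combination hac | linear_combination -hac

/-- with H_j(𝓛) = tr(𝓛^j)/(2j), one has H_{-j} = -H_j for all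
nonzero integers j. -/
theorem stmt3 (n : ℕ) (v : ℝ) (α : Matrix (Fin n) (Fin n) ℂ)
    (L : Matrix (Fin n ⊕ Fin n) (Fin n ⊕ Fin n) ℂ)
    (hL : L = fromBlocks ((Real.exp (-2*v) : ℂ) • (1 : Matrix (Fin n) (Fin n) ℂ))
      (-(Real.exp (-v) : ℂ) • α)
      ((Real.exp (-v) : ℂ) • αᴴ)
      ((Real.exp (2*v) : ℂ) • (1 : Matrix (Fin n) (Fin n) ℂ) - αᴴ * α))
    (H : ℤ → ℂ) (hH : ∀ j : ℤ, H j = (2 * (j : ℂ))⁻¹ * (L ^ j).trace) :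
    ∀ j : ℤ, j ≠ 0 → H (-j) = -H j := by
  have hba : ((Real.exp (-v) : ℂ)) * ((Real.exp (-v) : ℂ)) = ((Real.exp (-2*v) : ℂ)) := by
    rw [← Complex.ofReal_mul, ← Real.exp_add]
    norm_num
    ring_nf
  have hac : ((Real.exp (-2*v) : ℂ)) * ((Real.exp (2*v) : ℂ)) = 1 := by
    rw [← Complex.ofReal_mul, ← Real.exp_add]
    norm_num
  set a : ℂ := ((Real.exp (-2*v) : ℂ)) with hadef
  set b : ℂ := ((Real.exp (-v) : ℂ)) with hbdef
  set c : ℂ := ((Real.exp (2*v) : ℂ)) with hcdef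
  have hLM : L = Mblk a b c α αᴴ := by rw [hL, Mblk]
  set Li : Matrix (Fin n ⊕ Fin n) (Fin n ⊕ Fin n) ℂ :=
    fromBlocks (c • 1 - α * αᴴ) (b • α) (-b • αᴴ) (a • 1) with hLidef
  have h1 : L * Li = 1 := by rw [hLM]; exact Mblk_mul_right_inv a b c hba hac α αᴴ
  have h2 : Li * L = 1 := by rw [hLM]; exact Mblk_mul_left_inv a b c hba hac α αᴴ
  have hinv : L⁻¹ = Li := inv_eq_right_inv h1
  set Cm : Matrix (Fin n ⊕ Fin n) (Fin n ⊕ Fin n) ℂ := fromBlocks 0 1 1 0 with hCdef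
  have hCC : Cm * Cm = 1 := by
    rw [hCdef, fromBlocks_multiply, ← fromBlocks_one]
    simp
  have hsemi : Cm * Li = Mblk a b c αᴴ α * Cm := by
    rw [hCdef, hLidef, Mblk, fromBlocks_multiply, fromBlocks_multiply]
    simp
  have htr : ∀ k : ℕ, (Li ^ k).trace = (L ^ k).trace := by
    intro k
    rw [← trace_pow_of_semiconj hCC hCC hsemi k, Mblk_trace_pow_swap a b c α αᴴ k, hLM]
  have hmainN : ∀ k : ℕ, (L ^ (-(k:ℤ))).trace = (L ^ (k:ℤ)).trace := by
    intro k
    rw [zpow_neg_natCast, ← inv_pow', hinv, zpow_natCast]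
    exact htr k
  have hmain : ∀ i : ℤ, (L ^ (-i)).trace = (L ^ i).trace := by
    intro i
    rcases i.eq_nat_or_neg with ⟨k, rfl | rfl⟩
    · exact hmainN k
    · rw [neg_neg]
      exact (hmainN k).symm
  intro j _
  rw [hH, hH, hmain j]
  have hj : ((-j : ℤ) : ℂ) = -(j : ℂ) := by push_cast; ring
  rw [hj, show (2:ℂ) * -(j:ℂ) = -(2*(j:ℂ)) by ring, inv_neg, neg_mul]
end

section
/- Let n > 1 and x > 0. Define the n×n upper triangular matrix ν(x) by ν(x)_{jj} = 1 and ν(x)_{jk} = (1 - e^{-x})·e^{(k-j)x/2} for j < k (and 0 for j > k). Then the Hermitian matrix ν(x)ν(x)† has exactly two distinct eigenvalues, one of which has multiplicity 1 (the other having multiplicity n-1). -/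
/-!
With `E = exp (x / 2)` and `c = 1 - exp (-x)` one has `c * E ^ 2 = E ^ 2 - 1`, so the geometric
tails in the Gram products of the rows of `ν` telescope, giving
`ν * νᵀ = exp (-x) • 1 + c • w wᵀ` with `w k = E ^ (n - 1 - k)`. A scalar plus a rank-one matrix
has characteristic polynomial `(X - exp (-x) - c |w|²) * (X - exp (-x)) ^ (n - 1)`, and
`c |w|² > 0`.
-/

open Matrix Polynomial

theorem Matrix.charpoly_scalar_add_vecMulVec {R n : Type*} [CommRing R] [Fintype n]
    [DecidableEq n] [Nonempty n] (a : R) (u v : n → R) :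
    (scalar n a + vecMulVec u v).charpoly =
      (X - C (a + u ⬝ᵥ v)) * (X - C a) ^ (Fintype.card n - 1) := by
  have hshift := charpoly_sub_scalar (vecMulVec u v) (-a)
  rw [map_neg, sub_neg_eq_add, add_comm, charpoly_vecMulVec] at hshift
  obtain ⟨m, hm⟩ : ∃ m, Fintype.card n = m + 1 := Nat.exists_eq_add_one.mpr Fintype.card_pos
  rw [hshift, hm, Nat.add_sub_cancel, sub_comp, smul_comp, pow_comp, pow_comp, X_comp,
    smul_eq_C_mul, C_neg, ← sub_eq_add_neg, C_add]
  ring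

section UpperGeometric

variable {R : Type*} [CommRing R]

def upperGeomEntry (c E : R) (j m : ℕ) : R :=
  if j = m then 1 else if j < m then c * E ^ (m - j) else 0

theorem sum_upperGeomEntry_mul {c E : R} (hc : c * E ^ 2 = E ^ 2 - 1) {j k : ℕ} (hjk : j ≤ k)
    (d : ℕ) :
    ∑ m ∈ Finset.range (k + 1 + d), upperGeomEntry c E j m * upperGeomEntry c E k m =
      (if j = k then 1 - c else 0) + c * E ^ (k - j + d) * E ^ d := by
  induction d with
  | zero =>
    rw [Finset.sum_eq_single_of_mem k (by simp)]
    · rcases hjk.eq_or_lt with rfl | hlt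
      · simp [upperGeomEntry]
      · simp [upperGeomEntry, hlt, hlt.ne]
    · intro m hm hmk
      have : ¬ k < m := by simp at hm; omega
      simp [upperGeomEntry, Ne.symm hmk, this]
  | succ d ih =>
    rw [← add_assoc, Finset.sum_range_succ, ih]
    have hj : ¬ j = k + 1 + d ∧ j < k + 1 + d := by omega
    have hk : ¬ k = k + 1 + d ∧ k < k + 1 + d := by omega
    rw [upperGeomEntry, if_neg hj.1, if_pos hj.2, upperGeomEntry, if_neg hk.1, if_pos hk.2,
      show k + 1 + d - j = k - j + d + 1 by omega, show k + 1 + d - k = d + 1 by omega]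
    linear_combination c * E ^ (k - j + d) * E ^ d * hc

def upperGeom (c E : R) (n : ℕ) : Matrix (Fin n) (Fin n) R :=
  of fun j k => upperGeomEntry c E j k

theorem upperGeom_mul_transpose {c E : R} (hc : c * E ^ 2 = E ^ 2 - 1) (n : ℕ) :
    upperGeom c E n * (upperGeom c E n)ᵀ =
      scalar (Fin n) (1 - c) + vecMulVec (c • fun k : Fin n => E ^ (n - 1 - k))
        (fun k : Fin n => E ^ (n - 1 - k)) := by
  have hgram : ∀ j k : Fin n, j ≤ k →
      ∑ m : Fin n, upperGeomEntry c E j m * upperGeomEntry c E k m =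
        (if j = k then 1 - c else 0) + c * E ^ (n - 1 - j) * E ^ (n - 1 - k) := by
    intro j k hjk
    have hsum := sum_upperGeomEntry_mul hc hjk (n - 1 - k)
    rw [show (k : ℕ) + 1 + (n - 1 - k) = n by omega,
      show (k : ℕ) - j + (n - 1 - k) = n - 1 - j by omega] at hsum
    simp only [Fin.val_inj] at hsum
    rw [Fin.sum_univ_eq_sum_range (fun m => upperGeomEntry c E j m * upperGeomEntry c E k m),
      hsum]
  ext j k
  simp only [upperGeom, mul_apply, transpose_apply, of_apply, Matrix.add_apply, scalar_apply,
    diagonal_apply, vecMulVec_apply, Pi.smul_apply, smul_eq_mul]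
  rcases le_total j k with hjk | hkj
  · rw [hgram j k hjk]
  · simp_rw [mul_comm (upperGeomEntry c E j _), hgram k j hkj, @eq_comm _ k j]
    ring

end UpperGeometric

/-- ν(x)ν(x)† has exactly two distinct eigenvalues, one of
multiplicity 1 and the other of multiplicity n-1 (stated via the
characteristic polynomial). -/
theorem stmt5 (n : ℕ) (hn : 1 < n) (x : ℝ) (hx : 0 < x)
    (ν : Matrix (Fin n) (Fin n) ℂ)
    (hν : ∀ j k : Fin n, ν j k =
      if j = k then 1
      else if (j : ℕ) < (k : ℕ) then
        (((1 - Real.exp (-x)) * Real.exp ((((k : ℕ) : ℝ) - ((j : ℕ) : ℝ)) * x / 2) : ℝ) : ℂ)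
      else 0) :
    ∃ a b : ℂ, a ≠ b ∧
      (ν * νᴴ).charpoly = (X - C a) * (X - C b) ^ (n - 1) := by
  have : NeZero n := ⟨by omega⟩
  set c : ℝ := 1 - Real.exp (-x)
  set E : ℝ := Real.exp (x / 2)
  have hexp : ∀ d : ℕ, Real.exp (d * x / 2) = E ^ d := fun d => by
    rw [← Real.exp_nat_mul, mul_div_assoc]
  have hcE : c * E ^ 2 = E ^ 2 - 1 := by
    rw [← hexp, sub_mul, one_mul, ← Real.exp_add]
    norm_num
  have hνE : ν = upperGeom (c : ℂ) (E : ℂ) n := by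
    ext j k
    simp only [hν, upperGeom, of_apply, upperGeomEntry, Fin.val_inj]
    split_ifs with hjk hlt <;> try rfl
    rw [← Nat.cast_sub hlt.le, hexp]
    push_cast; rfl
  have hνH : νᴴ = νᵀ := by
    ext j k
    simp only [hνE, upperGeom, conjTranspose_apply, transpose_apply, of_apply, upperGeomEntry]
    split_ifs <;> simp [← Complex.ofReal_pow]
  have hcE' : (c : ℂ) * (E : ℂ) ^ 2 = (E : ℂ) ^ 2 - 1 := by exact_mod_cast hcE
  have hc : c ≠ 0 := sub_ne_zero.mpr (Real.exp_lt_one_iff.mpr (neg_neg_of_pos hx)).ne'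
  have hw : (0 : ℝ) < ∑ k : Fin n, E ^ (n - 1 - k) * E ^ (n - 1 - k) :=
    Finset.sum_pos (fun _ _ => by positivity) Finset.univ_nonempty
  rw [hνH, hνE, upperGeom_mul_transpose hcE', charpoly_scalar_add_vecMulVec, Fintype.card_fin]
  refine ⟨_, _, ?_, rfl⟩
  rw [ne_eq, add_eq_left, smul_dotProduct, smul_eq_mul, dotProduct]
  exact_mod_cast mul_ne_zero hc hw.ne'
end

section
/- Let u, v ∈ ℝ with u + v ≠ 0, and let q = diag(q_1,…,q_n) be a real diagonal matrix with q_1 ≥ ⋯ ≥ q_n ≥ 0. Suppose Ω = (sinh q)·α + e^v·cosh q for some n×n complex matrix α, and that ΩΩ† = e^{-2u}·1_n + e^{-2v}·(sinh q)². Then q_n > 0, and consequently sinh q is invertible. -/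
open Matrix

/-!
At an index `i` with `q i = 0` the `i`-th row of `Ω` is `eᵛ` times the `i`-th standard basis
row, so the `(i, i)` entry of `Ω Ωᴴ` is `e^{2v}`, while the constraint makes it `e^{-2u}`.
Hence `u + v = 0`. So no `q i` vanishes; with `q ≥ 0` this gives `q_n > 0`.
-/

section RowSingle

variable {m R : Type*} [Fintype m] [DecidableEq m]

theorem Matrix.diagonal_mul_add_smul_diagonal_row_of_eq_zero [Semiring R]
    (d e : m → R) (A : Matrix m m R) (c : R) {i : m} (hd : d i = 0) :
    (diagonal d * A + c • diagonal e) i = Pi.single i (c * e i) := by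
  ext j
  rcases eq_or_ne j i with rfl | hji
  · simp [diagonal_mul, hd]
  · simp [diagonal_mul, hd, diagonal_apply_ne _ hji.symm, hji]

theorem Matrix.mul_conjTranspose_apply_self_of_row_eq_single [NonUnitalSemiring R] [StarRing R]
    (A : Matrix m m R) {i : m} {c : R} (hA : A i = Pi.single i c) :
    (A * Aᴴ) i i = c * star c := by
  rw [mul_apply', hA, single_dotProduct, conjTranspose_apply, congrFun hA i, Pi.single_eq_same]

end RowSingle

theorem ne_zero_of_momentum_constraint {n : ℕ} {u v : ℝ} (huv : u + v ≠ 0)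
    {q : Fin n → ℝ} {α Ω : Matrix (Fin n) (Fin n) ℂ}
    (hΩ : Ω = (diagonal fun i => (Real.sinh (q i) : ℂ)) * α
      + (Real.exp v : ℂ) • diagonal fun i => (Real.cosh (q i) : ℂ))
    (hcon : Ω * Ωᴴ = (Real.exp (-2*u) : ℂ) • (1 : Matrix (Fin n) (Fin n) ℂ)
      + (Real.exp (-2*v) : ℂ) • (diagonal fun i => (Real.sinh (q i) : ℂ)) ^ 2)
    (i : Fin n) : q i ≠ 0 := by
  intro hq
  have hrow : Ω i = Pi.single i (Real.exp v : ℂ) := by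
    rw [hΩ, diagonal_mul_add_smul_diagonal_row_of_eq_zero _ _ _ _ (by simp [hq])]
    simp [hq]
  have hentry := congrFun (congrFun hcon i) i
  rw [mul_conjTranspose_apply_self_of_row_eq_single Ω hrow, Complex.star_def, Complex.conj_ofReal] at hentry
  have hexp : Real.exp (v + v) = Real.exp (-2 * u) := by
    apply Complex.ofReal_injective
    simpa [hq, sq, Complex.exp_add] using hentry
  exact huv (by linarith [Real.exp_injective hexp])

theorem stmt12_general (n : ℕ) (u v : ℝ) (huv : u + v ≠ 0)
    (lst : Fin n)
    (q : Fin n → ℝ)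
    (hpos : ∀ i : Fin n, 0 ≤ q i)
    (α Ω : Matrix (Fin n) (Fin n) ℂ)
    (hΩ : Ω = (diagonal fun i => (Real.sinh (q i) : ℂ)) * α
      + (Real.exp v : ℂ) • diagonal fun i => (Real.cosh (q i) : ℂ))
    (hcon : Ω * Ωᴴ = (Real.exp (-2*u) : ℂ) • (1 : Matrix (Fin n) (Fin n) ℂ)
      + (Real.exp (-2*v) : ℂ) • (diagonal fun i => (Real.sinh (q i) : ℂ)) ^ 2) :
    0 < q lst ∧ ∀ i : Fin n, Real.sinh (q i) ≠ 0 := by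
  have hne := ne_zero_of_momentum_constraint huv hΩ hcon
  exact ⟨(hpos lst).lt_of_ne' (hne lst), fun i => Real.sinh_ne_zero.2 (hne i)⟩

/-- under the momentum constraint, u + v ≠ 0 forces q_n > 0,
so sinh q is invertible. -/
theorem stmt12 (n : ℕ) (hn : 0 < n) (u v : ℝ) (huv : u + v ≠ 0)
    (lst : Fin n) (hlst : (lst : ℕ) = n - 1)
    (q : Fin n → ℝ)
    (hord : ∀ i j : Fin n, i ≤ j → q j ≤ q i)
    (hpos : ∀ i : Fin n, 0 ≤ q i)
    (α Ω : Matrix (Fin n) (Fin n) ℂ)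
    (hΩ : Ω = (diagonal fun i => (Real.sinh (q i) : ℂ)) * α
      + (Real.exp v : ℂ) • diagonal fun i => (Real.cosh (q i) : ℂ))
    (hcon : Ω * Ωᴴ = (Real.exp (-2*u) : ℂ) • (1 : Matrix (Fin n) (Fin n) ℂ)
      + (Real.exp (-2*v) : ℂ) • (diagonal fun i => (Real.sinh (q i) : ℂ)) ^ 2) :
    0 < q lst ∧ ∀ i : Fin n, Real.sinh (q i) ≠ 0 :=
  stmt12_general n u v huv lst q hpos α Ω hΩ hcon
end

section
/- Let g ∈ SU(n,n), i.e., g ∈ SL(2n,ℂ) with g†·J·g = J where J = diag(1_n, -1_n). Suppose g = g_+ · [[cosh q, sinh q],[sinh q, cosh q]] · h_+ = g_+' · [[cosh q', sinh q'],[sinh q', cosh q']] · h_+' with g_+, h_+, g_+', h_+' in the block-diagonal subgroup G_+ = S(U(n)×U(n)) and q, q' real diagonal matrices with q_1 ≥ ⋯ ≥ q_n ≥ 0 and similarly for q'. Then q = q'. -/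
/-!
The top-left block of `g_+ A(q) h_+` is `a · cosh q · c` with `a`, `c` unitary, so
`(a cosh q c)ᴴ (a cosh q c) = cᴴ (cosh q)² c` is unitarily conjugate to `(cosh q)²`: its
characteristic roots are the squared singular values `cosh² q_i` of that block.
Both decompositions therefore give the same multiset `{cosh² q_i}`. As `cosh²` is strictly
increasing on `[0, ∞)`, the tuples `cosh² ∘ q` and `cosh² ∘ q'` are antitone, hence equal as
sorted lists, and `q = q'` by injectivity of `cosh²` on `[0, ∞)`.
-/

open Matrix Polynomial

theorem Antitone.eq_of_multiset_map_univ_eq {α : Type*} [PartialOrder α] {n : ℕ}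
    {f g : Fin n → α} (hf : Antitone f) (hg : Antitone g)
    (h : Multiset.map f Finset.univ.val = Multiset.map g Finset.univ.val) : f = g := by
  rw [Fin.univ_val_map, Fin.univ_val_map, Multiset.coe_eq_coe] at h
  exact List.ofFn_injective (h.eq_of_sortedGE hf.sortedGE_ofFn hg.sortedGE_ofFn)

namespace Matrix

variable {n : Type*} [Fintype n] [DecidableEq n]

theorem roots_charpoly_diagonal {R : Type*} [CommRing R] [IsDomain R] (v : n → R) :
    (diagonal v).charpoly.roots = Multiset.map v Finset.univ.val := by
  rw [charpoly_diagonal, roots_prod _ _ (Finset.prod_ne_zero_iff.mpr fun i _ => X_sub_C_ne_zero _)]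
  simp

theorem charpoly_conjTranspose_mul_mul {R : Type*} [CommRing R] [StarRing R]
    {c : Matrix n n R} (hc : cᴴ * c = 1) (A : Matrix n n R) :
    (cᴴ * A * c).charpoly = A.charpoly := by
  rw [Matrix.mul_assoc, charpoly_mul_comm, Matrix.mul_assoc, mul_eq_one_comm.mp hc,
    Matrix.mul_one]

theorem conjTranspose_mul_self_of_mul_diagonal_mul {a c : Matrix n n ℂ}
    (ha : aᴴ * a = 1) (s : n → ℝ) :
    (a * diagonal (fun i => (s i : ℂ)) * c)ᴴ * (a * diagonal (fun i => (s i : ℂ)) * c)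
      = cᴴ * diagonal (fun i => ((s i ^ 2 : ℝ) : ℂ)) * c := by
  simp only [conjTranspose_mul, diagonal_conjTranspose, Matrix.mul_assoc]
  rw [← Matrix.mul_assoc aᴴ, ha, Matrix.one_mul, ← Matrix.mul_assoc (diagonal _),
    diagonal_mul_diagonal]
  congr 3
  funext i
  simp [sq]

theorem roots_charpoly_conjTranspose_mul_self_of_mul_diagonal_mul {a c : Matrix n n ℂ}
    (ha : aᴴ * a = 1) (hc : cᴴ * c = 1) (s : n → ℝ) :
    ((a * diagonal (fun i => (s i : ℂ)) * c)ᴴ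
        * (a * diagonal (fun i => (s i : ℂ)) * c)).charpoly.roots =
      (Multiset.map (fun i => s i ^ 2) Finset.univ.val).map ((↑) : ℝ → ℂ) := by
  rw [conjTranspose_mul_self_of_mul_diagonal_mul ha, charpoly_conjTranspose_mul_mul hc,
    roots_charpoly_diagonal, Multiset.map_map]
  rfl

end Matrix

theorem Real.strictMonoOn_cosh_sq : StrictMonoOn (fun x => cosh x ^ 2) (Set.Ici 0) :=
  fun _ hx _ hy hxy =>
    pow_lt_pow_left₀ (cosh_strictMonoOn hx hy hxy) (cosh_pos _).le two_ne_zero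

theorem Antitone.cosh_sq_comp {ι : Type*} [Preorder ι] {q : ι → ℝ} (hq : Antitone q)
    (hq₀ : ∀ i, 0 ≤ q i) : Antitone fun i => Real.cosh (q i) ^ 2 :=
  fun _ _ hij => Real.strictMonoOn_cosh_sq.monotoneOn (hq₀ _) (hq₀ _) (hq hij)

theorem stmt17_general (n : ℕ) (q q' : Fin n → ℝ)
    (hq1 : ∀ i j : Fin n, i ≤ j → q j ≤ q i) (hq2 : ∀ i : Fin n, 0 ≤ q i)
    (hq1' : ∀ i j : Fin n, i ≤ j → q' j ≤ q' i) (hq2' : ∀ i : Fin n, 0 ≤ q' i)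
    (a b c d a' b' c' d' : Matrix (Fin n) (Fin n) ℂ)
    (ha : aᴴ * a = 1) (hc : cᴴ * c = 1)
    (ha' : a'ᴴ * a' = 1) (hc' : c'ᴴ * c' = 1)
    (heq : fromBlocks a 0 0 b
        * fromBlocks (diagonal fun i => (Real.cosh (q i) : ℂ))
            (diagonal fun i => (Real.sinh (q i) : ℂ))
            (diagonal fun i => (Real.sinh (q i) : ℂ))
            (diagonal fun i => (Real.cosh (q i) : ℂ))
        * fromBlocks c 0 0 d
      = fromBlocks a' 0 0 b'
        * fromBlocks (diagonal fun i => (Real.cosh (q' i) : ℂ))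
            (diagonal fun i => (Real.sinh (q' i) : ℂ))
            (diagonal fun i => (Real.sinh (q' i) : ℂ))
            (diagonal fun i => (Real.cosh (q' i) : ℂ))
        * fromBlocks c' 0 0 d') :
    q = q' := by
  have hblock : a * diagonal (fun i => (Real.cosh (q i) : ℂ)) * c
      = a' * diagonal (fun i => (Real.cosh (q' i) : ℂ)) * c' := by
    simpa [fromBlocks_multiply] using congrArg toBlocks₁₁ heq
  have hsq : Multiset.map (fun i => Real.cosh (q i) ^ 2) Finset.univ.val
      = Multiset.map (fun i => Real.cosh (q' i) ^ 2) Finset.univ.val := by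
    apply Multiset.map_injective Complex.ofReal_injective
    rw [← roots_charpoly_conjTranspose_mul_self_of_mul_diagonal_mul ha hc,
      ← roots_charpoly_conjTranspose_mul_self_of_mul_diagonal_mul ha' hc', hblock]
  have hcosh := (Antitone.cosh_sq_comp hq1 hq2).eq_of_multiset_map_univ_eq
    (Antitone.cosh_sq_comp hq1' hq2') hsq
  funext i
  exact Real.strictMonoOn_cosh_sq.injOn (hq2 i) (hq2' i) (congrFun hcosh i)

/-- uniqueness of the radial part q in the generalized Cartan
decomposition of SU(n,n) with respect to G₊ = S(U(n)×U(n)). The middle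
factor is A(q) = [[cosh q, sinh q],[sinh q, cosh q]]. -/
theorem stmt17 (n : ℕ) (q q' : Fin n → ℝ)
    (hq1 : ∀ i j : Fin n, i ≤ j → q j ≤ q i) (hq2 : ∀ i : Fin n, 0 ≤ q i)
    (hq1' : ∀ i j : Fin n, i ≤ j → q' j ≤ q' i) (hq2' : ∀ i : Fin n, 0 ≤ q' i)
    (a b c d a' b' c' d' : Matrix (Fin n) (Fin n) ℂ)
    (ha : aᴴ * a = 1) (hb : bᴴ * b = 1) (hc : cᴴ * c = 1) (hd : dᴴ * d = 1)
    (ha' : a'ᴴ * a' = 1) (hb' : b'ᴴ * b' = 1) (hc' : c'ᴴ * c' = 1) (hd' : d'ᴴ * d' = 1)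
    (hdetL : (fromBlocks a 0 0 b).det = 1) (hdetR : (fromBlocks c 0 0 d).det = 1)
    (hdetL' : (fromBlocks a' 0 0 b').det = 1) (hdetR' : (fromBlocks c' 0 0 d').det = 1)
    (heq : fromBlocks a 0 0 b
        * fromBlocks (diagonal fun i => (Real.cosh (q i) : ℂ))
            (diagonal fun i => (Real.sinh (q i) : ℂ))
            (diagonal fun i => (Real.sinh (q i) : ℂ))
            (diagonal fun i => (Real.cosh (q i) : ℂ))
        * fromBlocks c 0 0 d
      = fromBlocks a' 0 0 b'
        * fromBlocks (diagonal fun i => (Real.cosh (q' i) : ℂ))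
            (diagonal fun i => (Real.sinh (q' i) : ℂ))
            (diagonal fun i => (Real.sinh (q' i) : ℂ))
            (diagonal fun i => (Real.cosh (q' i) : ℂ))
        * fromBlocks c' 0 0 d') :
    q = q' :=
  stmt17_general n q q' hq1 hq2 hq1' hq2' a b c d a' b' c' d' ha hc ha' hc' heq
end

section
/- The 2-form ω̂_c = i·Σ_{j=1}^{n-1} dz_j ∧ dz̄_j + (i/(2 z_n z̄_n))·dz_n ∧ dz̄_n on ℂ^{n-1} × ℂ^× pulls back under the map Z_x : C_x × 𝕋ⁿ → M̂_c^o (given by z_j = (p̂_j - p̂_{j+1} - x/2)^{1/2}·Π_{k>j} e^{iq̂_k}, z_n = e^{-p̂_1}·Π_k e^{iq̂_k}) to the Darboux form Σ_{k=1}^{n} dq̂_k ∧ dp̂_k on C_x × 𝕋ⁿ. -/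
/-!
Write a component as `z = ρ e^{iφ}` with `ρ` real and `φ` real-linear. Then
`dz = e^{iφ} (dρ + i ρ dφ)`, and since `|e^{iφ}| = 1`,
`i dz ∧ dz̄ = 2ρ dρ ∧ dφ = d(ρ²) ∧ dφ` and `i dz ∧ dz̄ / (2|z|²) = d(log ρ) ∧ dφ`.
For `z_j = √(p̂_j - p̂_{j+1} - x/2) e^{i Σ_{k>j} q̂_k}` this is
`(dp̂_j - dp̂_{j+1}) ∧ Σ_{k>j} dq̂_k`, for `z_n = e^{-p̂_1} e^{i Σ_k q̂_k}` it is
`-dp̂_1 ∧ Σ_k dq̂_k`, and summation by parts collapses the total to `Σ_k dq̂_k ∧ dp̂_k`.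
-/

open Finset Complex
open ComplexConjugate

section Polar

variable {E : Type*} [NormedAddCommGroup E] [NormedSpace ℝ E]

/-- `i dz ∧ dz̄` evaluated on `(u, v)`, where `dz = L`. -/
noncomputable def wedgeConj (L : E →L[ℝ] ℂ) (u v : E) : ℂ :=
  I * (L u * conj (L v) - L v * conj (L u))

theorem wedgeConj_smul (c : ℂ) (L : E →L[ℝ] ℂ) (u v : E) :
    wedgeConj (c • L) u v = normSq c * wedgeConj L u v := by
  simp only [wedgeConj, smul_apply, smul_eq_mul, map_mul, ← mul_conj]
  ring

theorem wedgeConj_ofReal_add_I_smul (α β : E →L[ℝ] ℝ) (u v : E) :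
    wedgeConj (ofRealCLM.comp α + I • ofRealCLM.comp β) u v
      = ((2 * (α u * β v - α v * β u) : ℝ) : ℂ) := by
  simp only [wedgeConj, add_apply, smul_apply,
    ContinuousLinearMap.comp_apply, ofRealCLM_apply, smul_eq_mul, map_add, map_mul, conj_I,
    conj_ofReal]
  push_cast
  linear_combination (-2 * (α u * β v - α v * β u) : ℂ) * I_sq

theorem hasFDerivAt_ofReal_mul_exp_I_mul {ρ : E → ℝ} {ρ' : E →L[ℝ] ℝ} {w : E}
    (hρ : HasFDerivAt ρ ρ' w) (φ : E →L[ℝ] ℝ) :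
    HasFDerivAt (fun y => (ρ y : ℂ) * exp (I * (φ y : ℂ)))
      (exp (I * (φ w : ℂ)) • (ofRealCLM.comp ρ' + I • ofRealCLM.comp (ρ w • φ))) w := by
  have hre : HasFDerivAt (fun y => (ρ y : ℂ)) (ofRealCLM.comp ρ') w :=
    ofRealCLM.hasFDerivAt.comp w hρ
  have hexp : HasFDerivAt (fun y => exp (I * (φ y : ℂ)))
      (exp (I * (φ w : ℂ)) • I • ofRealCLM.comp φ) w :=
    ((ofRealCLM.comp φ).hasFDerivAt.const_mul I).cexp
  refine (hre.mul hexp).congr_fderiv ?_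
  ext u
  simp only [add_apply, smul_apply, ContinuousLinearMap.comp_apply, ofRealCLM_apply, smul_eq_mul,
    ContinuousLinearMap.comp_smulₛₗ, Real.ringHom_apply, smul_add, real_smul]
  ring

theorem wedgeConj_fderiv_ofReal_mul_exp_I_mul {ρ : E → ℝ} {ρ' : E →L[ℝ] ℝ} {w : E}
    (hρ : HasFDerivAt ρ ρ' w) (φ : E →L[ℝ] ℝ) (u v : E) :
    wedgeConj (fderiv ℝ (fun y => (ρ y : ℂ) * exp (I * (φ y : ℂ))) w) u v
      = ((2 * ρ w * (ρ' u * φ v - ρ' v * φ u) : ℝ) : ℂ) := by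
  rw [(hasFDerivAt_ofReal_mul_exp_I_mul hρ φ).fderiv, wedgeConj_smul,
    wedgeConj_ofReal_add_I_smul, normSq_eq_norm_sq, norm_exp_I_mul_ofReal]
  simp only [smul_apply, smul_eq_mul]
  push_cast
  ring

end Polar

section PhaseSpace

variable {ι : Type*}

noncomputable def pCoord (k : ι) : ((ι → ℝ) × (ι → ℝ)) →L[ℝ] ℝ :=
  (ContinuousLinearMap.proj k).comp (ContinuousLinearMap.fst ℝ _ _)

noncomputable def qCoord (k : ι) : ((ι → ℝ) × (ι → ℝ)) →L[ℝ] ℝ :=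
  (ContinuousLinearMap.proj k).comp (ContinuousLinearMap.snd ℝ _ _)

@[simp] theorem pCoord_apply (k : ι) (w : (ι → ℝ) × (ι → ℝ)) : pCoord k w = w.1 k := rfl

@[simp] theorem qCoord_apply (k : ι) (w : (ι → ℝ) × (ι → ℝ)) : qCoord k w = w.2 k := rfl

theorem prod_exp_I_mul_ofReal (s : Finset ι) (q : ι → ℝ) :
    ∏ k ∈ s, exp (I * (q k : ℂ)) = exp (I * ((∑ k ∈ s, q k : ℝ) : ℂ)) := by
  rw [← exp_sum, ofReal_sum, mul_sum]

theorem mul_prod_exp_I_mul_eq (ρ : (ι → ℝ) × (ι → ℝ) → ℝ) (s : Finset ι) :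
    (fun y => (ρ y : ℂ) * ∏ k ∈ s, exp (I * (y.2 k : ℂ)))
      = fun y => (ρ y : ℂ) * exp (I * ((∑ k ∈ s, qCoord k) y : ℂ)) := by
  ext y
  simp [prod_exp_I_mul_ofReal]

variable [Fintype ι]

theorem differentiableAt_mul_prod_exp_I_mul {ρ : (ι → ℝ) × (ι → ℝ) → ℝ} {w : (ι → ℝ) × (ι → ℝ)}
    (hρ : DifferentiableAt ℝ ρ w) (s : Finset ι) :
    DifferentiableAt ℝ (fun y => (ρ y : ℂ) * ∏ k ∈ s, exp (I * (y.2 k : ℂ))) w := by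
  rw [mul_prod_exp_I_mul_eq]
  exact (hasFDerivAt_ofReal_mul_exp_I_mul hρ.hasFDerivAt _).differentiableAt

theorem wedgeConj_fderiv_mul_prod_exp_I_mul {ρ : (ι → ℝ) × (ι → ℝ) → ℝ}
    {ρ' : ((ι → ℝ) × (ι → ℝ)) →L[ℝ] ℝ} {w : (ι → ℝ) × (ι → ℝ)} (hρ : HasFDerivAt ρ ρ' w)
    (s : Finset ι) (u v : (ι → ℝ) × (ι → ℝ)) :
    wedgeConj (fderiv ℝ (fun y => (ρ y : ℂ) * ∏ k ∈ s, exp (I * (y.2 k : ℂ))) w) u v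
      = ((2 * ρ w * (ρ' u * ∑ k ∈ s, v.2 k - ρ' v * ∑ k ∈ s, u.2 k) : ℝ) : ℂ) := by
  rw [mul_prod_exp_I_mul_eq, wedgeConj_fderiv_ofReal_mul_exp_I_mul hρ]
  simp

theorem hasFDerivAt_sqrt_sub_sub (a b : ι) {c : ℝ} {w : (ι → ℝ) × (ι → ℝ)}
    (hw : c < w.1 a - w.1 b) :
    HasFDerivAt (fun y => √(y.1 a - y.1 b - c))
      ((1 / (2 * √(w.1 a - w.1 b - c))) • (pCoord a - pCoord b)) w :=
  ((pCoord a - pCoord b).hasFDerivAt.sub_const c).sqrt (sub_pos.2 hw).ne'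

theorem hasFDerivAt_exp_neg (a : ι) (w : (ι → ℝ) × (ι → ℝ)) :
    HasFDerivAt (fun y => Real.exp (-y.1 a)) (Real.exp (-w.1 a) • -pCoord a) w :=
  (-pCoord a).hasFDerivAt.exp

theorem wedgeConj_fderiv_sqrt_mul_prod_exp_I_mul (a b : ι) {c : ℝ}
    {w : (ι → ℝ) × (ι → ℝ)} (hw : c < w.1 a - w.1 b) (s : Finset ι) (u v : (ι → ℝ) × (ι → ℝ)) :
    wedgeConj (fderiv ℝ
        (fun y => (√(y.1 a - y.1 b - c) : ℂ) * ∏ k ∈ s, exp (I * (y.2 k : ℂ))) w) u v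
      = (((u.1 a - u.1 b) * ∑ k ∈ s, v.2 k - (v.1 a - v.1 b) * ∑ k ∈ s, u.2 k : ℝ) : ℂ) := by
  rw [wedgeConj_fderiv_mul_prod_exp_I_mul (hasFDerivAt_sqrt_sub_sub a b hw)]
  have hsqrt : √(w.1 a - w.1 b - c) ≠ 0 := (Real.sqrt_pos.2 (by linarith)).ne'
  congr 1
  simp only [smul_apply, sub_apply, pCoord_apply, smul_eq_mul]
  field_simp

theorem wedgeConj_fderiv_exp_neg_mul_prod_exp_I_mul (a : ι) (s : Finset ι)
    (w u v : (ι → ℝ) × (ι → ℝ)) :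
    1 / (2 * (normSq ((Real.exp (-w.1 a) : ℂ) * ∏ k ∈ s, exp (I * (w.2 k : ℂ))) : ℂ))
        * wedgeConj (fderiv ℝ
          (fun y => (Real.exp (-y.1 a) : ℂ) * ∏ k ∈ s, exp (I * (y.2 k : ℂ))) w) u v
      = ((v.1 a * ∑ k ∈ s, u.2 k - u.1 a * ∑ k ∈ s, v.2 k : ℝ) : ℂ) := by
  rw [wedgeConj_fderiv_mul_prod_exp_I_mul (hasFDerivAt_exp_neg a w), prod_exp_I_mul_ofReal,
    normSq_mul, normSq_ofReal, normSq_eq_norm_sq, norm_exp_I_mul_ofReal]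
  have hexp : Real.exp (-w.1 a) ≠ 0 := (Real.exp_pos _).ne'
  simp only [smul_apply, neg_apply, pCoord_apply, smul_eq_mul]
  push_cast
  field_simp
  ring

end PhaseSpace

theorem Fin.sum_filter_castSucc_lt_sub_succ {M : Type*} [AddCommGroup M] {n : ℕ}
    (f : Fin (n + 1) → M) (k : Fin (n + 1)) :
    ∑ i ∈ univ.filter (fun i : Fin n => i.castSucc < k), (f i.castSucc - f i.succ)
      = f 0 - f k := by
  induction k using Fin.induction with
  | zero => simp
  | succ j ih =>
    have hfilter : univ.filter (fun i : Fin n => i.castSucc < j.succ)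
        = insert j (univ.filter (fun i : Fin n => i.castSucc < j.castSucc)) := by
      ext i
      simp only [mem_filter, mem_univ, true_and, mem_insert, Fin.lt_def, Fin.val_castSucc,
        Fin.val_succ, Fin.ext_iff]
      omega
    rw [hfilter, sum_insert (by simp), ih]
    abel

theorem Fin.sum_sub_succ_mul_sum_Ioi {R : Type*} [CommRing R] {n : ℕ} (a b : Fin (n + 1) → R) :
    ∑ i : Fin n, (a i.castSucc - a i.succ) * ∑ k ∈ Ioi i.castSucc, b k
      = ∑ k : Fin (n + 1), b k * (a 0 - a k) := by
  simp_rw [mul_sum]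
  rw [sum_comm' (t' := univ) (s' := fun k => univ.filter (fun i : Fin n => i.castSucc < k))
    (by simp)]
  refine sum_congr rfl fun k _ => ?_
  rw [← sum_mul, Fin.sum_filter_castSucc_lt_sub_succ, mul_comm]

theorem darboux_sum {R : Type*} [CommRing R] {n : ℕ}
    (u v : (Fin (n + 1) → R) × (Fin (n + 1) → R)) :
    ∑ i : Fin n, ((u.1 i.castSucc - u.1 i.succ) * ∑ k ∈ Ioi i.castSucc, v.2 k
        - (v.1 i.castSucc - v.1 i.succ) * ∑ k ∈ Ioi i.castSucc, u.2 k)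
      + (v.1 0 * ∑ k, u.2 k - u.1 0 * ∑ k, v.2 k)
      = ∑ k, (u.2 k * v.1 k - v.2 k * u.1 k) := by
  rw [sum_sub_distrib, Fin.sum_sub_succ_mul_sum_Ioi, Fin.sum_sub_succ_mul_sum_Ioi, mul_sum,
    mul_sum, ← sum_sub_distrib, ← sum_sub_distrib, ← sum_add_distrib]
  exact sum_congr rfl fun k _ => by ring

theorem stmt19_general (n : ℕ) (x : ℝ)
    (F : (Fin (n + 1) → ℝ) × (Fin (n + 1) → ℝ) → (Fin (n + 1) → ℂ))
    (hF : ∀ (pq : (Fin (n + 1) → ℝ) × (Fin (n + 1) → ℝ)) (j : Fin (n + 1)),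
      F pq j =
        if (j : ℕ) = n then
          (Real.exp (-(pq.1 0)) : ℂ)
            * ∏ k : Fin (n + 1), Complex.exp (Complex.I * (pq.2 k : ℂ))
        else
          (Real.sqrt (pq.1 j - pq.1 (j + 1) - x / 2) : ℂ)
            * ∏ k ∈ Ioi j, Complex.exp (Complex.I * (pq.2 k : ℂ))) :
    ∀ pq : (Fin (n + 1) → ℝ) × (Fin (n + 1) → ℝ),
      (∀ j : Fin (n + 1), (j : ℕ) < n → x / 2 < pq.1 j - pq.1 (j + 1)) →
      ∀ u v : (Fin (n + 1) → ℝ) × (Fin (n + 1) → ℝ),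
        (∑ j : Fin (n + 1),
          (if (j : ℕ) = n then 1 / (2 * (Complex.normSq (F pq j) : ℂ)) else 1)
            * (Complex.I *
                (fderiv ℝ F pq u j * (starRingEnd ℂ) (fderiv ℝ F pq v j)
                  - fderiv ℝ F pq v j * (starRingEnd ℂ) (fderiv ℝ F pq u j))))
        = ((∑ k : Fin (n + 1), (u.2 k * v.1 k - v.2 k * u.1 k) : ℝ) : ℂ) := by
  intro pq hpq u v
  have hF_castSucc (i : Fin n) : (fun w => F w i.castSucc) = fun w =>
      (√(w.1 i.castSucc - w.1 i.succ - x / 2) : ℂ)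
        * ∏ k ∈ Ioi i.castSucc, exp (I * (w.2 k : ℂ)) := by
    ext w
    rw [hF, if_neg (by simpa using i.isLt.ne), Fin.coeSucc_eq_succ]
  have hF_last : (fun w => F w (Fin.last n)) = fun w =>
      (Real.exp (-w.1 0) : ℂ) * ∏ k, exp (I * (w.2 k : ℂ)) := by
    ext w
    rw [hF, if_pos (Fin.val_last n)]
  have hgap (i : Fin n) : x / 2 < pq.1 i.castSucc - pq.1 i.succ := by
    simpa [Fin.coeSucc_eq_succ] using hpq i.castSucc (Fin.castSucc_lt_last i)
  have hdiff : DifferentiableAt ℝ F pq := by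
    refine differentiableAt_pi.2 fun j => ?_
    induction j using Fin.lastCases with
    | last =>
      rw [hF_last]
      exact differentiableAt_mul_prod_exp_I_mul (hasFDerivAt_exp_neg 0 pq).differentiableAt _
    | cast i =>
      rw [hF_castSucc]
      exact differentiableAt_mul_prod_exp_I_mul
        (hasFDerivAt_sqrt_sub_sub _ _ (hgap i)).differentiableAt _
  have hwedge (j : Fin (n + 1)) : I * (fderiv ℝ F pq u j * conj (fderiv ℝ F pq v j)
      - fderiv ℝ F pq v j * conj (fderiv ℝ F pq u j))
      = wedgeConj (fderiv ℝ (fun w => F w j) pq) u v := by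
    rw [fderiv_apply hdiff j]
    rfl
  simp only [hwedge]
  rw [Fin.sum_univ_castSucc, if_pos (Fin.val_last n), congrFun hF_last pq, hF_last,
    wedgeConj_fderiv_exp_neg_mul_prod_exp_I_mul]
  rw [sum_congr rfl fun i _ => by
    rw [if_neg (by simpa using i.isLt.ne), one_mul, hF_castSucc,
      wedgeConj_fderiv_sqrt_mul_prod_exp_I_mul _ _ (hgap i)]]
  exact_mod_cast darboux_sum u v

/-- the pullback of ω̂_c = i Σ_{j<n} dz_j∧dz̄_j
+ (i/(2 z_n z̄_n)) dz_n∧dz̄_n under the map Z_x equals the Darboux form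
Σ_k dq̂_k ∧ dp̂_k on C_x × 𝕋^{n+1}, stated pointwise on pairs of tangent
vectors via the derivative of Z_x. (Sizes: the paper's n is n+1 here; the
last coordinate plays the role of z_n.) -/
theorem stmt19 (n : ℕ) (x : ℝ) (hx : 0 < x)
    (F : (Fin (n + 1) → ℝ) × (Fin (n + 1) → ℝ) → (Fin (n + 1) → ℂ))
    (hF : ∀ (pq : (Fin (n + 1) → ℝ) × (Fin (n + 1) → ℝ)) (j : Fin (n + 1)),
      F pq j =
        if (j : ℕ) = n then
          (Real.exp (-(pq.1 0)) : ℂ)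
            * ∏ k : Fin (n + 1), Complex.exp (Complex.I * (pq.2 k : ℂ))
        else
          (Real.sqrt (pq.1 j - pq.1 (j + 1) - x / 2) : ℂ)
            * ∏ k ∈ Ioi j, Complex.exp (Complex.I * (pq.2 k : ℂ))) :
    ∀ pq : (Fin (n + 1) → ℝ) × (Fin (n + 1) → ℝ),
      (∀ j : Fin (n + 1), (j : ℕ) < n → x / 2 < pq.1 j - pq.1 (j + 1)) →
      ∀ u v : (Fin (n + 1) → ℝ) × (Fin (n + 1) → ℝ),
        (∑ j : Fin (n + 1),
          (if (j : ℕ) = n then 1 / (2 * (Complex.normSq (F pq j) : ℂ)) else 1)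
            * (Complex.I *
                (fderiv ℝ F pq u j * (starRingEnd ℂ) (fderiv ℝ F pq v j)
                  - fderiv ℝ F pq v j * (starRingEnd ℂ) (fderiv ℝ F pq u j))))
        = ((∑ k : Fin (n + 1), (u.2 k * v.1 k - v.2 k * u.1 k) : ℝ) : ℂ) :=
  stmt19_general n x F hF
end
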